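/- arXiv:0804.4083 — 6 statements merged into one kernel-verified Lean document; each statement's English description precedes it below -/
import Mathlib

section
/- Assume the quasi-Kähler (class W₃) condition. Let T(x,y,z) = (1/2)(F(x,Jy,z) - F(y,Jx,z)) (the (0,3)-torsion tensor of the B-connection). Then the cyclic sum vanishes: T(x,y,Jz) + T(y,z,Jx) + T(z,x,Jy) = 0 for all x, y, z in V. -/
/-!
Since `g` is anti-invariant under `J` and `∇J` anticommutes with `J`, `F(x, Jy, Jz) = F(x, y, z)`.
Hence `T(x, y, Jz) = ½ (F(x, y, z) - F(y, x, z))`, and the cyclic sum of these is half the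
difference of the `W₃` identities for `(x, y, z)` and `(y, x, z)`.
-/

theorem apply_neg_J_apply_J_eq {R M : Type*} [CommRing R] [AddCommGroup M] [Module R M]
    (g : M →ₗ[R] M →ₗ[R] R) (J : M →ₗ[R] M) (hgJ : ∀ x y, g (J x) (J y) = -(g x y))
    (u v : M) : g (-(J u)) (J v) = g u v := by
  rw [map_neg, LinearMap.neg_apply, hgJ, neg_neg]

theorem cyclic_sum_torsion_B_connection_W3_general
    {V : Type*} [AddCommGroup V] [Module ℝ V]
    (g : V →ₗ[ℝ] V →ₗ[ℝ] ℝ)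
    (J : V →ₗ[ℝ] V)
    (hgJ : ∀ x y, g (J x) (J y) = -(g x y))
    (N : V →ₗ[ℝ] V →ₗ[ℝ] V)
    (hN2 : ∀ x y, N x (J y) = -(J (N x y)))
    (F : V → V → V → ℝ) (hF : ∀ x y z, F x y z = g (N x y) z)
    (hW3 : ∀ x y z, F x y z + F y z x + F z x y = 0)
    (T : V → V → V → ℝ)
    (hT : ∀ x y z, T x y z = (1/2) * (F x (J y) z - F y (J x) z)) :
    ∀ x y z, T x y (J z) + T y z (J x) + T z x (J y) = 0 := by
  have hFJ : ∀ a b c, F a (J b) (J c) = F a b c := fun a b c => by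
    rw [hF, hF, hN2, apply_neg_J_apply_J_eq g J hgJ]
  intro x y z
  simp only [hT, hFJ]
  linarith [hW3 x y z, hW3 y x z]

/-- On a quasi-Kähler (class W₃) manifold with Norden metric, the cyclic sum
of the (0,3)-torsion tensor of the B-connection vanishes:
`𝔖_{x,y,z} T(x,y,Jz) = 0`. -/
theorem cyclic_sum_torsion_B_connection_W3
    {V : Type*} [AddCommGroup V] [Module ℝ V]
    (g : V →ₗ[ℝ] V →ₗ[ℝ] ℝ) (hg_symm : ∀ x y, g x y = g y x)
    (J : V →ₗ[ℝ] V) (hJ : ∀ x, J (J x) = -x)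
    (hgJ : ∀ x y, g (J x) (J y) = -(g x y))
    (N : V →ₗ[ℝ] V →ₗ[ℝ] V)
    (hN1 : ∀ x y z, g (N x y) z = g (N x z) y)
    (hN2 : ∀ x y, N x (J y) = -(J (N x y)))
    (F : V → V → V → ℝ) (hF : ∀ x y z, F x y z = g (N x y) z)
    (hW3 : ∀ x y z, F x y z + F y z x + F z x y = 0)
    (T : V → V → V → ℝ)
    (hT : ∀ x y z, T x y z = (1/2) * (F x (J y) z - F y (J x) z)) :
    ∀ x y z, T x y (J z) + T y z (J x) + T z x (J y) = 0 :=
  cyclic_sum_torsion_B_connection_W3_general g J hgJ N hN2 F hF hW3 T hT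
end

section
/- Let Q(x,y) = (1/2) N(x, J y) (so that D_x y = ∇_x y + Q(x,y) is the B-connection). Then for all x, y, z in V: (i) N(x,y) + Q(x, Jy) - J(Q(x,y)) = 0 (expressing DJ = 0), and (ii) g(Q(x,y), z) + g(y, Q(x,z)) = 0 (expressing Dg = 0); in particular the (0,3)-tensor Q(x,y,z) = g(Q(x,y), z) = (1/2) F(x, Jy, z) is skew-symmetric in its last two arguments. -/
/-! The Norden condition `g(Jx, Jy) = -g(x, y)` together with `J² = -1` makes `J` symmetric
with respect to `g`. Using this, the symmetry of `F` in its last two arguments and the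
anti-commutation `N(x, Jy) = -J N(x, y)`, one gets
`g(N(x, Jy), z) = g(J N(x, z), y) = -g(N(x, Jz), y)`, which is the skew-symmetry `Dg = 0`. -/

namespace Norden

variable {K V : Type*} [Field K] [AddCommGroup V] [Module K V]

theorem bilin_J_apply_eq_apply_J (g : V →ₗ[K] V →ₗ[K] K) (J : V →ₗ[K] V)
    (hJ : ∀ x, J (J x) = -x) (hgJ : ∀ x y, g (J x) (J y) = -(g x y)) (x y : V) :
    g (J x) y = g x (J y) := by
  simpa [hJ] using hgJ x (J y)

/-- The deformation tensor `Q(x, y) = ½ (∇ₓJ)(Jy)` of the B-connection `D = ∇ + Q`. -/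
def bConnectionTensor (J : V →ₗ[K] V) (N : V →ₗ[K] V →ₗ[K] V) (x y : V) : V :=
  (1 / 2 : K) • N x (J y)

variable (J : V →ₗ[K] V) (N : V →ₗ[K] V →ₗ[K] V)

theorem bConnectionTensor_apply_J (hJ : ∀ x, J (J x) = -x) (x y : V) :
    bConnectionTensor J N x (J y) = -((1 / 2 : K) • N x y) := by
  simp [bConnectionTensor, hJ]

theorem J_bConnectionTensor (hJ : ∀ x, J (J x) = -x) (hN : ∀ x y, N x (J y) = -(J (N x y)))
    (x y : V) : J (bConnectionTensor J N x y) = (1 / 2 : K) • N x y := by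
  simp [bConnectionTensor, hN, hJ]

theorem add_bConnectionTensor_J_sub_J_bConnectionTensor [NeZero (2 : K)]
    (hJ : ∀ x, J (J x) = -x) (hN : ∀ x y, N x (J y) = -(J (N x y))) (x y : V) :
    N x y + bConnectionTensor J N x (J y) - J (bConnectionTensor J N x y) = 0 := by
  rw [bConnectionTensor_apply_J J N hJ, J_bConnectionTensor J N hJ hN]
  nth_rw 1 [← one_smul K (N x y), ← add_halves (1 : K), add_smul]
  abel

variable (g : V →ₗ[K] V →ₗ[K] K)

theorem bilin_bConnectionTensor (x y z : V) :
    g (bConnectionTensor J N x y) z = 1 / 2 * g (N x (J y)) z := by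
  simp [bConnectionTensor]

theorem bilin_bConnectionTensor_swap (hJ : ∀ x, J (J x) = -x)
    (hgJ : ∀ x y, g (J x) (J y) = -(g x y)) (hN1 : ∀ x y z, g (N x y) z = g (N x z) y)
    (hN2 : ∀ x y, N x (J y) = -(J (N x y))) (x y z : V) :
    g (bConnectionTensor J N x y) z = -g (bConnectionTensor J N x z) y := by
  have key : g (N x (J y)) z = -g (N x (J z)) y := by
    rw [hN1, ← bilin_J_apply_eq_apply_J g J hJ hgJ, hN2, map_neg, LinearMap.neg_apply, neg_neg]
  rw [bilin_bConnectionTensor, bilin_bConnectionTensor, key, mul_neg]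

end Norden

open Norden in
/-- The B-connection `D_x y = ∇_x y + Q(x,y)` with `Q(x,y) = (1/2) N(x,Jy)`
is a natural connection: `DJ = 0` and `Dg = 0`; in particular the (0,3)-tensor
`Q(x,y,z) = g(Q(x,y),z) = (1/2) F(x,Jy,z)` is skew-symmetric in `y, z`. -/
theorem B_connection_natural
    {V : Type*} [AddCommGroup V] [Module ℝ V]
    (g : V →ₗ[ℝ] V →ₗ[ℝ] ℝ) (hg_symm : ∀ x y, g x y = g y x)
    (J : V →ₗ[ℝ] V) (hJ : ∀ x, J (J x) = -x)
    (hgJ : ∀ x y, g (J x) (J y) = -(g x y))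
    (N : V →ₗ[ℝ] V →ₗ[ℝ] V)
    (hN1 : ∀ x y z, g (N x y) z = g (N x z) y)
    (hN2 : ∀ x y, N x (J y) = -(J (N x y)))
    (F : V → V → V → ℝ) (hF : ∀ x y z, F x y z = g (N x y) z)
    (Q : V → V → V) (hQ : ∀ x y, Q x y = (1/2 : ℝ) • N x (J y)) :
    (∀ x y, N x y + Q x (J y) - J (Q x y) = 0) ∧
    (∀ x y z, g (Q x y) z + g y (Q x z) = 0) ∧
    (∀ x y z, g (Q x y) z = (1/2) * F x (J y) z) ∧
    (∀ x y z, g (Q x y) z = -(g (Q x z) y)) := by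
  obtain rfl : Q = bConnectionTensor J N := funext₂ hQ
  have skew := bilin_bConnectionTensor_swap J N g hJ hgJ hN1 hN2
  refine ⟨add_bConnectionTensor_J_sub_J_bConnectionTensor J N hJ hN2,
    fun x y z => ?_, fun x y z => ?_, skew⟩
  · rw [skew, hg_symm, neg_add_cancel]
  · rw [hF, bilin_bConnectionTensor]
end

section
/- (Corollary 2.5) Let R be a curvature-like quadrilinear form on V satisfying the class-𝓛₂ condition 𝔖_{x,y,z} R(x,y,Jz,Jw) = 0, and suppose K is a Kähler tensor. Then the quadrilinear form H(x,y,z,w) = R(x,y,z,w) - R(x,y,Jz,Jw) is a Kähler tensor. -/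
/-- A quadrilinear form `L` is curvature-like if it has the curvature
skew-symmetries and satisfies the first Bianchi identity. -/
def IsCurvatureLike {V : Type*} [AddCommGroup V] [Module ℝ V]
    (L : V → V → V → V → ℝ) : Prop :=
  (∀ x y z w, L x y z w = -(L y x z w)) ∧
  (∀ x y z w, L x y z w = -(L x y w z)) ∧
  (∀ x y z w, L x y z w + L y z x w + L z x y w = 0)

/-- A curvature-like tensor `L` is a Kähler tensor if moreover
`L(x,y,Jz,Jw) = -L(x,y,z,w)`. -/
def IsKaehlerTensor {V : Type*} [AddCommGroup V] [Module ℝ V]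
    (J : V →ₗ[ℝ] V) (L : V → V → V → V → ℝ) : Prop :=
  IsCurvatureLike L ∧ (∀ x y z w, L x y (J z) (J w) = -(L x y z w))

theorem sub_apply_J_J_of_apply_neg_neg {V : Type*} [Neg V] {R : V → V → V → V → ℝ} {J : V → V}
    (hJ : ∀ x, J (J x) = -x) (hR : ∀ x y z w, R x y (-z) (-w) = R x y z w) (x y z w : V) :
    R x y (J z) (J w) - R x y (J (J z)) (J (J w)) = -(R x y z w - R x y (J z) (J w)) := by
  rw [hJ, hJ, hR]; ring

/-- In the Kähler condition for `K = (2R - 2R(·,·,J·,J·) + P)/4` the `P`-parts cancel, since `P`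
is itself `J`-anti-invariant, and what is left is `R(x,y,J²z,J²w) = R(x,y,z,w)`. -/
theorem apply_neg_neg_of_bCurvature_antiInvariant {V : Type*} [Neg V] {R P K : V → V → V → V → ℝ}
    {J : V → V} (hJ : ∀ x, J (J x) = -x) (hP : ∀ x y z w, P x y (J z) (J w) = -P x y z w)
    (hK : ∀ x y z w, K x y z w = (1/4) * (2 * R x y z w - 2 * R x y (J z) (J w) + P x y z w))
    (hKJ : ∀ x y z w, K x y (J z) (J w) = -K x y z w) (x y z w : V) :
    R x y (-z) (-w) = R x y z w := by
  have h := hKJ x y z w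
  rw [hK, hK, hP, hJ, hJ] at h
  linarith

theorem bilin_N_J_N_J {V : Type*} [AddCommGroup V] [Module ℝ V]
    (g : V →ₗ[ℝ] V →ₗ[ℝ] ℝ) (J : V →ₗ[ℝ] V)
    (hgJ : ∀ x y, g (J x) (J y) = -(g x y)) (N : V →ₗ[ℝ] V →ₗ[ℝ] V)
    (hN : ∀ x y, N x (J y) = -(J (N x y))) (x y z w : V) :
    g (N x (J z)) (N y (J w)) = -g (N x z) (N y w) := by
  simp only [hN, map_neg, LinearMap.neg_apply, neg_neg, hgJ]

theorem IsCurvatureLike.sub_comp_comp {V : Type*} [AddCommGroup V] [Module ℝ V]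
    {R : V → V → V → V → ℝ} (hR : IsCurvatureLike R) {J : V → V} (hBianchiJ : ∀ x y z w,
      R x y (J z) (J w) + R y z (J x) (J w) + R z x (J y) (J w) = 0) :
    IsCurvatureLike fun x y z w => R x y z w - R x y (J z) (J w) := by
  obtain ⟨hR₁₂, hR₃₄, hBianchi⟩ := hR
  refine ⟨fun x y z w => ?_, fun x y z w => ?_, fun x y z w => ?_⟩ <;> dsimp only
  · rw [hR₁₂ x y z w, hR₁₂ x y (J z) (J w)]; ring
  · rw [hR₃₄ x y z w, hR₃₄ x y (J z) (J w)]; ring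
  · linear_combination hBianchi x y z w - hBianchiJ x y z w

theorem H_is_Kaehler_tensor_general
    {V : Type*} [AddCommGroup V] [Module ℝ V]
    (g : V →ₗ[ℝ] V →ₗ[ℝ] ℝ)
    (J : V →ₗ[ℝ] V) (hJ : ∀ x, J (J x) = -x)
    (hgJ : ∀ x y, g (J x) (J y) = -(g x y))
    (N : V →ₗ[ℝ] V →ₗ[ℝ] V)
    (hN2 : ∀ x y, N x (J y) = -(J (N x y)))
    (P : V → V → V → V → ℝ)
    (hP : ∀ x y z w, P x y z w = g (N x z) (N y w) - g (N y z) (N x w))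
    (R : V → V → V → V → ℝ)
    (hR : IsCurvatureLike R)
    (hL2 : ∀ x y z w,
      R x y (J z) (J w) + R y z (J x) (J w) + R z x (J y) (J w) = 0)
    (K : V → V → V → V → ℝ)
    (hK : ∀ x y z w, K x y z w
      = (1/4) * (2 * R x y z w - 2 * R x y (J z) (J w) + P x y z w))
    (hKKaehler : IsKaehlerTensor J K)
    (H : V → V → V → V → ℝ)
    (hH : ∀ x y z w, H x y z w = R x y z w - R x y (J z) (J w)) :
    IsKaehlerTensor J H := by
  have hPJ : ∀ x y z w, P x y (J z) (J w) = -P x y z w := fun x y z w => by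
    rw [hP, hP, bilin_N_J_N_J g J hgJ N hN2, bilin_N_J_N_J g J hgJ N hN2]
    ring
  have hReven := apply_neg_neg_of_bCurvature_antiInvariant hJ hPJ hK hKKaehler.2
  obtain rfl : H = fun x y z w => R x y z w - R x y (J z) (J w) := by
    funext x y z w; exact hH x y z w
  exact ⟨hR.sub_comp_comp hL2, sub_apply_J_J_of_apply_neg_neg hJ hReven⟩

/-- (Corollary 2.5) If the curvature tensor `K` of the B-connection is
Kählerian on a manifold of the class `W₃ ∩ 𝓛₂`, then the tensor
`H(x,y,z,w) = R(x,y,z,w) - R(x,y,Jz,Jw)` is a Kähler tensor. -/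
theorem H_is_Kaehler_tensor
    {V : Type*} [AddCommGroup V] [Module ℝ V]
    (g : V →ₗ[ℝ] V →ₗ[ℝ] ℝ) (hg_symm : ∀ x y, g x y = g y x)
    (J : V →ₗ[ℝ] V) (hJ : ∀ x, J (J x) = -x)
    (hgJ : ∀ x y, g (J x) (J y) = -(g x y))
    (N : V →ₗ[ℝ] V →ₗ[ℝ] V)
    (hN1 : ∀ x y z, g (N x y) z = g (N x z) y)
    (hN2 : ∀ x y, N x (J y) = -(J (N x y)))
    (P : V → V → V → V → ℝ)
    (hP : ∀ x y z w, P x y z w = g (N x z) (N y w) - g (N y z) (N x w))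
    (R : V → V → V → V → ℝ)
    (hR : IsCurvatureLike R)
    (hL2 : ∀ x y z w,
      R x y (J z) (J w) + R y z (J x) (J w) + R z x (J y) (J w) = 0)
    (K : V → V → V → V → ℝ)
    (hK : ∀ x y z w, K x y z w
      = (1/4) * (2 * R x y z w - 2 * R x y (J z) (J w) + P x y z w))
    (hKKaehler : IsKaehlerTensor J K)
    (H : V → V → V → V → ℝ)
    (hH : ∀ x y z w, H x y z w = R x y z w - R x y (J z) (J w)) :
    IsKaehlerTensor J H :=
  H_is_Kaehler_tensor_general g J hJ hgJ N hN2 P hP R hR hL2 K hK hKKaehler H hH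
end

section
/- (Equation 3.2) For every quadrilinear form R on V: τ(R) - τ** = 2τ(K) - (1/2)τ(P), where τ** = Σ_{i,j,k,s} g^{ij} g^{ks} R(e_i, e_k, J e_s, J e_j) and K(x,y,z,w) = (1/4)(2R(x,y,z,w) - 2R(x,y,Jz,Jw) + P(x,y,z,w)). -/
/-!
The scalar curvature `τ` is linear in the quadrilinear form, and after reordering the sums
`τ**` is `τ` of `(x, y, z, w) ↦ R(x, y, Jz, Jw)`. So (3.2) is `τ` applied to the defining
relation `4K = 2R - 2R(·, ·, J·, J·) + P`.
-/

/-- The Ricci tensor of a quadrilinear form `L`: `ρ(L)(y,z) = g^{ij} L(e_i,y,z,e_j)`. -/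
noncomputable def ricci {V ι : Type*} [Fintype ι]
    (ginv : ι → ι → ℝ) (e : ι → V) (L : V → V → V → V → ℝ) (y z : V) : ℝ :=
  ∑ i, ∑ j, ginv i j * L (e i) y z (e j)

/-- The scalar curvature of a quadrilinear form `L`: `τ(L) = g^{ks} ρ(L)(e_k,e_s)`. -/
noncomputable def scalarCurv {V ι : Type*} [Fintype ι]
    (ginv : ι → ι → ℝ) (e : ι → V) (L : V → V → V → V → ℝ) : ℝ :=
  ∑ k, ∑ s, ginv k s * ricci ginv e L (e k) (e s)

open Finset

theorem sum_comm_pairs {α β γ δ M : Type*} [Fintype α] [Fintype β] [Fintype γ] [Fintype δ]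
    [AddCommMonoid M] (f : α → β → γ → δ → M) :
    ∑ k, ∑ s, ∑ i, ∑ j, f i j k s = ∑ i, ∑ j, ∑ k, ∑ s, f i j k s :=
  calc ∑ k, ∑ s, ∑ i, ∑ j, f i j k s = ∑ k, ∑ i, ∑ j, ∑ s, f i j k s :=
        sum_congr rfl fun _ _ => sum_comm.trans (sum_congr rfl fun _ _ => sum_comm)
    _ = ∑ i, ∑ j, ∑ k, ∑ s, f i j k s := sum_comm.trans (sum_congr rfl fun _ _ => sum_comm)

section ScalarCurvature

variable {V ι : Type*} [Fintype ι] (ginv : ι → ι → ℝ) (e : ι → V)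

noncomputable def scalarCurvLinear : (V → V → V → V → ℝ) →ₗ[ℝ] ℝ where
  toFun := scalarCurv ginv e
  map_add' L M := by
    simp only [scalarCurv, ricci, Pi.add_apply, mul_add, sum_add_distrib]
  map_smul' c L := by
    simp only [scalarCurv, ricci, Pi.smul_apply, smul_eq_mul, RingHom.id_apply, mul_sum]
    exact sum_congr rfl fun _ _ => sum_congr rfl fun _ _ =>
      sum_congr rfl fun _ _ => sum_congr rfl fun _ _ => by ring

@[simp]
theorem scalarCurvLinear_apply (L : V → V → V → V → ℝ) :
    scalarCurvLinear ginv e L = scalarCurv ginv e L :=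
  rfl

theorem scalarCurv_eq_sum (L : V → V → V → V → ℝ) :
    scalarCurv ginv e L
      = ∑ i, ∑ j, ∑ k, ∑ s, ginv i j * ginv k s * L (e i) (e k) (e s) (e j) := by
  rw [← sum_comm_pairs]
  simp only [scalarCurv, ricci, mul_sum]
  exact sum_congr rfl fun _ _ => sum_congr rfl fun _ _ =>
    sum_congr rfl fun _ _ => sum_congr rfl fun _ _ => by ring

end ScalarCurvature

theorem scalar_curvature_relation_general
    {V : Type*} [AddCommGroup V] [Module ℝ V]
    (J : V →ₗ[ℝ] V)
    (P : V → V → V → V → ℝ)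
    {ι : Type*} [Fintype ι]
    (e : Module.Basis ι ℝ V) (ginv : ι → ι → ℝ)
    (R : V → V → V → V → ℝ)
    (K : V → V → V → V → ℝ)
    (hK : ∀ x y z w, K x y z w
      = (1/4) * (2 * R x y z w - 2 * R x y (J z) (J w) + P x y z w))
    (tauStarStar : ℝ)
    (hTauStarStar : tauStarStar
      = ∑ i, ∑ j, ∑ k, ∑ s,
          ginv i j * ginv k s * R (e i) (e k) (J (e s)) (J (e j))) :
    scalarCurv ginv (⇑e) R - tauStarStar
      = 2 * scalarCurv ginv (⇑e) K - (1/2) * scalarCurv ginv (⇑e) P := by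
  set RJ : V → V → V → V → ℝ := fun x y z w => R x y (J z) (J w)
  have hK_eq : K = (1/4 : ℝ) • ((2 : ℝ) • R - (2 : ℝ) • RJ + P) := by
    funext x y z w
    simp [hK, RJ]
  have hτK : scalarCurv ginv e K = (1/4) * (2 * scalarCurv ginv e R
      - 2 * scalarCurv ginv e RJ + scalarCurv ginv e P) := by
    simp only [hK_eq, ← scalarCurvLinear_apply, map_smul, map_add, map_sub, smul_eq_mul]
  have hτStarStar : tauStarStar = scalarCurv ginv e RJ := by
    rw [hTauStarStar, scalarCurv_eq_sum]
  rw [hτK, hτStarStar]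
  ring

/-- (Equation 3.2) `τ - τ** = 2τ(K) - (1/2)τ(P)`, where
`τ** = g^{ij} g^{ks} R(e_i,e_k,Je_s,Je_j)`. -/
theorem scalar_curvature_relation
    {V : Type*} [AddCommGroup V] [Module ℝ V]
    (g : V →ₗ[ℝ] V →ₗ[ℝ] ℝ) (hg_symm : ∀ x y, g x y = g y x)
    (J : V →ₗ[ℝ] V) (hJ : ∀ x, J (J x) = -x)
    (hgJ : ∀ x y, g (J x) (J y) = -(g x y))
    (N : V →ₗ[ℝ] V →ₗ[ℝ] V)
    (hN1 : ∀ x y z, g (N x y) z = g (N x z) y)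
    (hN2 : ∀ x y, N x (J y) = -(J (N x y)))
    (P : V → V → V → V → ℝ)
    (hP : ∀ x y z w, P x y z w = g (N x z) (N y w) - g (N y z) (N x w))
    {ι : Type*} [Fintype ι] [DecidableEq ι]
    (e : Module.Basis ι ℝ V) (ginv : ι → ι → ℝ)
    (hginv : ∀ i j, ∑ k, ginv i k * g (e k) (e j) = if i = j then 1 else 0)
    (R : V → V → V → V → ℝ)
    (K : V → V → V → V → ℝ)
    (hK : ∀ x y z w, K x y z w
      = (1/4) * (2 * R x y z w - 2 * R x y (J z) (J w) + P x y z w))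
    (tauStarStar : ℝ)
    (hTauStarStar : tauStarStar
      = ∑ i, ∑ j, ∑ k, ∑ s,
          ginv i j * ginv k s * R (e i) (e k) (J (e s)) (J (e j))) :
    scalarCurv ginv (⇑e) R - tauStarStar
      = 2 * scalarCurv ginv (⇑e) K - (1/2) * scalarCurv ginv (⇑e) P :=
  scalar_curvature_relation_general J P e ginv R K hK tauStarStar hTauStarStar
end

section
/- (Equation 3.4) Assume the quasi-Kähler (class W₃) condition. Then τ(P) = -(1/2)‖∇J‖², where ‖∇J‖² = Σ_{i,j,k,s} g^{ij} g^{ks} g(N(e_i,e_k), N(e_j,e_s)) is the square norm of ∇J. -/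
/-!
Write `⟨S, S'⟩` for the full `g`-contraction of `V`-valued bilinear maps, so that
`‖∇J‖² = ⟨N, N⟩`. The second term of `P` contracts against the trace `g^{ks} N(e_k, e_s)`,
which vanishes: tracing the `W₃` identity shows that twice it is minus the trace of
`N(w, ·)`, and that trace is zero because `N(w, ·)` anticommutes with `J`. The first term
of `P` contracts to `⟨N, Nᵗ⟩`, where `Nᵗ(x, y) = N(y, x)`. By the `W₃` identity,
`g(N(x, y) + N(y, x), z) = -g(N(z, x), y)`, hence `⟨N + Nᵗ, N + Nᵗ⟩ = ⟨N, N⟩`, while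
expanding the left side gives `2⟨N, N⟩ + 2⟨N, Nᵗ⟩`. So `τ(P) = ⟨N, Nᵗ⟩ = -½⟨N, N⟩`.
-/

open Finset

theorem Matrix.IsSymm.of_mul_eq_one {ι R : Type*} [Fintype ι] [DecidableEq ι] [CommRing R]
    {A B : Matrix ι ι R} (hB : B.IsSymm) (h : A * B = 1) : A.IsSymm :=
  Matrix.inv_eq_left_inv h ▸ hB.inv

theorem LinearMap.trace_eq_zero_of_anticomm {V : Type*} [AddCommGroup V] [Module ℝ V]
    [FiniteDimensional ℝ V] {J A : V →ₗ[ℝ] V} (hJ : ∀ x, J (J x) = -x)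
    (hA : ∀ x, A (J x) = -J (A x)) : LinearMap.trace ℝ V A = 0 := by
  have hJJ : J ∘ₗ J = -LinearMap.id := LinearMap.ext hJ
  have hAJ : A ∘ₗ J = -(J ∘ₗ A) := LinearMap.ext hA
  have hcycle : LinearMap.trace ℝ V (A ∘ₗ J ∘ₗ J) = LinearMap.trace ℝ V A := by
    rw [← LinearMap.comp_assoc, LinearMap.trace_comp_comm', hAJ, LinearMap.comp_neg,
      ← LinearMap.comp_assoc, hJJ]
    simp
  rw [hJJ, LinearMap.comp_neg, LinearMap.comp_id, map_neg] at hcycle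
  linarith

section MetricTrace

variable {V ι : Type*} [Fintype ι] (ginv : ι → ι → ℝ) (e : ι → V)

noncomputable def metricTrace (B : V → V → ℝ) : ℝ :=
  ∑ i, ∑ j, ginv i j * B (e i) (e j)

theorem scalarCurv_eq_metricTrace (L : V → V → V → V → ℝ) :
    scalarCurv ginv e L =
      metricTrace ginv e fun y z => metricTrace ginv e fun x w => L x y z w :=
  rfl

theorem metricTrace_add (B C : V → V → ℝ) :
    metricTrace ginv e (fun x y => B x y + C x y) =
      metricTrace ginv e B + metricTrace ginv e C := by
  simp only [metricTrace, mul_add, sum_add_distrib]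

theorem metricTrace_sub (B C : V → V → ℝ) :
    metricTrace ginv e (fun x y => B x y - C x y) =
      metricTrace ginv e B - metricTrace ginv e C := by
  simp only [metricTrace, mul_sub, sum_sub_distrib]

theorem metricTrace_comm (B : V → V → V → V → ℝ) :
    metricTrace ginv e (fun x x' => metricTrace ginv e (fun y y' => B x x' y y')) =
      metricTrace ginv e (fun y y' => metricTrace ginv e (fun x x' => B x x' y y')) := by
  simp only [metricTrace, mul_sum, ← Fintype.sum_prod_type']
  exact Fintype.sum_bijective (fun x => (x.2.2.1, x.2.2.2, x.1, x.2.1))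
    (Function.Involutive.bijective fun _ => rfl) _ _ fun _ => mul_left_comm _ _ _

theorem metricTrace_swap (hsymm : ∀ i j, ginv i j = ginv j i) (B : V → V → ℝ) :
    metricTrace ginv e (fun x y => B y x) = metricTrace ginv e B := by
  simp only [metricTrace]
  rw [sum_comm]
  simp only [hsymm]

end MetricTrace

theorem inv_gram_symm {V ι : Type*} [AddCommGroup V] [Module ℝ V] [Fintype ι] [DecidableEq ι]
    {g : V →ₗ[ℝ] V →ₗ[ℝ] ℝ} {e : ι → V} {ginv : ι → ι → ℝ} (hg : ∀ x y, g x y = g y x)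
    (hginv : ∀ i j, ∑ k, ginv i k * g (e k) (e j) = if i = j then 1 else 0) (i j : ι) :
    ginv i j = ginv j i :=
  (Matrix.IsSymm.of_mul_eq_one (A := Matrix.of ginv) (B := Matrix.of fun i j => g (e i) (e j))
    (Matrix.IsSymm.ext fun _ _ => hg _ _)
    (Matrix.ext fun i j => by simpa [Matrix.mul_apply, Matrix.one_apply] using hginv i j)).apply j i

section Basis

variable {V ι : Type*} [AddCommGroup V] [Module ℝ V] [Fintype ι] [DecidableEq ι]
  {g : V →ₗ[ℝ] V →ₗ[ℝ] ℝ} {e : Module.Basis ι ℝ V} {ginv : ι → ι → ℝ}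

theorem Module.Basis.repr_eq_sum_inv_gram (hg : ∀ x y, g x y = g y x)
    (hginv : ∀ i j, ∑ k, ginv i k * g (e k) (e j) = if i = j then 1 else 0) (v : V) (i : ι) :
    e.repr v i = ∑ j, ginv i j * g v (e j) := by
  conv_rhs => rw [← e.sum_repr v]
  simp only [map_sum, map_smul, LinearMap.coe_sum, Finset.sum_apply, LinearMap.smul_apply,
    smul_eq_mul, mul_sum]
  have hδ : ∀ m, ∑ j, ginv i j * g (e m) (e j) = if i = m then 1 else 0 := fun m => by
    simp only [hg (e m)]
    exact hginv i m
  rw [sum_comm]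
  simp [mul_left_comm (ginv i _), ← mul_sum, hδ]

theorem metricTrace_mul_eq (hg : ∀ x y, g x y = g y x)
    (hginv : ∀ i j, ∑ k, ginv i k * g (e k) (e j) = if i = j then 1 else 0) (u v : V) :
    metricTrace ginv e (fun a b => g u a * g v b) = g u v := by
  conv_rhs => rw [← e.sum_repr v]
  simp only [metricTrace, map_sum, map_smul, smul_eq_mul, e.repr_eq_sum_inv_gram hg hginv,
    sum_mul]
  exact sum_congr rfl fun _ _ => sum_congr rfl fun _ _ => by ring

theorem metricTrace_eq_trace (hg : ∀ x y, g x y = g y x)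
    (hginv : ∀ i j, ∑ k, ginv i k * g (e k) (e j) = if i = j then 1 else 0) (A : V →ₗ[ℝ] V) :
    metricTrace ginv e (fun x y => g (A x) y) = LinearMap.trace ℝ V A := by
  simp only [LinearMap.trace_eq_matrix_trace ℝ e, Matrix.trace, Matrix.diag,
    LinearMap.toMatrix_apply, e.repr_eq_sum_inv_gram hg hginv, metricTrace]

end Basis

section TensorInner

variable {V ι : Type*} [AddCommGroup V] [Module ℝ V] [Fintype ι]
  (ginv : ι → ι → ℝ) (e : ι → V) (g : V →ₗ[ℝ] V →ₗ[ℝ] ℝ)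

noncomputable def tensorInner (S S' : V → V → V) : ℝ :=
  metricTrace ginv e fun x x' => metricTrace ginv e fun y y' => g (S x y) (S' x' y')

theorem tensorInner_add_left (S₁ S₂ S' : V → V → V) :
    tensorInner ginv e g (fun x y => S₁ x y + S₂ x y) S' =
      tensorInner ginv e g S₁ S' + tensorInner ginv e g S₂ S' := by
  simp only [tensorInner, map_add, LinearMap.add_apply, metricTrace_add]

theorem tensorInner_add_right (S S₁' S₂' : V → V → V) :
    tensorInner ginv e g S (fun x y => S₁' x y + S₂' x y) =
      tensorInner ginv e g S S₁' + tensorInner ginv e g S S₂' := by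
  simp only [tensorInner, map_add, metricTrace_add]

theorem tensorInner_flip_left (S S' : V → V → V) :
    tensorInner ginv e g (fun x y => S y x) S' = tensorInner ginv e g S (fun x y => S' y x) :=
  metricTrace_comm ginv e _

theorem tensorInner_flip_flip (S S' : V → V → V) :
    tensorInner ginv e g (fun x y => S y x) (fun x y => S' y x) = tensorInner ginv e g S S' :=
  metricTrace_comm ginv e _

end TensorInner

section Norden

variable {V ι : Type*} [AddCommGroup V] [Module ℝ V] [Fintype ι]
  {ginv : ι → ι → ℝ} {g : V →ₗ[ℝ] V →ₗ[ℝ] ℝ} {N : V → V → V}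

theorem apply_add_apply_swap (hN : ∀ x y z, g (N x y) z = g (N x z) y)
    (hcyc : ∀ x y z, g (N x y) z + g (N y z) x + g (N z x) y = 0) (x y z : V) :
    g (N x y + N y x) z = -g (N z x) y := by
  rw [map_add, LinearMap.add_apply, hN y x z]
  linarith [hcyc x y z]

theorem metricTrace_apply_eq_zero {e : ι → V} (hsymm : ∀ i j, ginv i j = ginv j i)
    (hN : ∀ x y z, g (N x y) z = g (N x z) y)
    (hcyc : ∀ x y z, g (N x y) z + g (N y z) x + g (N z x) y = 0)
    (htr : ∀ w, metricTrace ginv e (fun x y => g (N w x) y) = 0) (w : V) :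
    metricTrace ginv e (fun x y => g (N x y) w) = 0 := by
  have h := congrArg (metricTrace ginv e) (funext₂ fun x y => hcyc x y w)
  simp only [metricTrace_add, hN _ w, metricTrace_swap ginv e hsymm (fun x y => g (N x y) w),
    htr] at h
  simpa [metricTrace] using h

variable [DecidableEq ι] {e : Module.Basis ι ℝ V}

theorem tensorInner_add_swap (hg : ∀ x y, g x y = g y x)
    (hginv : ∀ i j, ∑ k, ginv i k * g (e k) (e j) = if i = j then 1 else 0)
    (hN : ∀ x y z, g (N x y) z = g (N x z) y)
    (hcyc : ∀ x y z, g (N x y) z + g (N y z) x + g (N z x) y = 0) :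
    tensorInner ginv e g (fun x y => N x y + N y x) (fun x y => N x y + N y x) =
      tensorInner ginv e g N N := by
  have hexpand : ∀ x y x' y', g (N x y + N y x) (N x' y' + N y' x') =
      metricTrace ginv e (fun a b => g (N a x) y * g (N b x') y') := fun x y x' y' => by
    rw [← metricTrace_mul_eq hg hginv]
    simp only [apply_add_apply_swap hN hcyc, neg_mul_neg]
  have hcontract : ∀ x x', (metricTrace ginv e fun y y' =>
      metricTrace ginv e fun a b => g (N a x) y * g (N b x') y') =
        metricTrace ginv e fun a b => g (N a x) (N b x') := fun x x' => by
    rw [metricTrace_comm]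
    simp only [metricTrace_mul_eq hg hginv]
  simp only [tensorInner, hexpand, hcontract]
  exact metricTrace_comm ginv e _

theorem tensorInner_flip_eq (hg : ∀ x y, g x y = g y x)
    (hginv : ∀ i j, ∑ k, ginv i k * g (e k) (e j) = if i = j then 1 else 0)
    (hN : ∀ x y z, g (N x y) z = g (N x z) y)
    (hcyc : ∀ x y z, g (N x y) z + g (N y z) x + g (N z x) y = 0) :
    tensorInner ginv e g N (fun x y => N y x) =
      -(1 / 2) * tensorInner ginv e g N N := by
  have h := tensorInner_add_swap hg hginv hN hcyc
  rw [tensorInner_add_left _ _ _ N (fun x y => N y x), tensorInner_add_right _ _ _ N N,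
    tensorInner_add_right _ _ _ (fun x y => N y x) N, tensorInner_flip_flip _ _ _ N N,
    tensorInner_flip_left _ _ _ N N] at h
  linarith

end Norden

theorem tau_P_eq_general
    {V : Type*} [AddCommGroup V] [Module ℝ V]
    (g : V →ₗ[ℝ] V →ₗ[ℝ] ℝ) (hg_symm : ∀ x y, g x y = g y x)
    (J : V →ₗ[ℝ] V) (hJ : ∀ x, J (J x) = -x)
    (N : V →ₗ[ℝ] V →ₗ[ℝ] V)
    (hN1 : ∀ x y z, g (N x y) z = g (N x z) y)
    (hN2 : ∀ x y, N x (J y) = -(J (N x y)))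
    (F : V → V → V → ℝ) (hF : ∀ x y z, F x y z = g (N x y) z)
    (hW3 : ∀ x y z, F x y z + F y z x + F z x y = 0)
    (P : V → V → V → V → ℝ)
    (hP : ∀ x y z w, P x y z w = g (N x z) (N y w) - g (N y z) (N x w))
    {ι : Type*} [Fintype ι] [DecidableEq ι]
    (e : Module.Basis ι ℝ V) (ginv : ι → ι → ℝ)
    (hginv : ∀ i j, ∑ k, ginv i k * g (e k) (e j) = if i = j then 1 else 0)
    (sqNormNablaJ : ℝ)
    (hsqNorm : sqNormNablaJ
      = ∑ i, ∑ j, ∑ k, ∑ s,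
          ginv i j * ginv k s * g (N (e i) (e k)) (N (e j) (e s))) :
    scalarCurv ginv (⇑e) P = -(1/2) * sqNormNablaJ := by
  have : FiniteDimensional ℝ V := Module.Finite.of_basis e
  have hsymm := inv_gram_symm hg_symm hginv
  have hcyc : ∀ x y z, g (N x y) z + g (N y z) x + g (N z x) y = 0 := fun x y z => by
    simpa only [hF] using hW3 x y z
  have htr : ∀ w, metricTrace ginv e (fun x y => g (N w x) y) = 0 := fun w =>
    (metricTrace_eq_trace hg_symm hginv (N w)).trans
      (LinearMap.trace_eq_zero_of_anticomm hJ (hN2 w))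
  have hmean : ∀ v, metricTrace ginv e (fun x w => g v (N x w)) = 0 := fun v => by
    simp only [hg_symm v]
    exact metricTrace_apply_eq_zero hsymm hN1 hcyc htr v
  have hτ : scalarCurv ginv e P =
      tensorInner ginv e g (fun x y => N x y) (fun x y => N y x) := by
    simp only [scalarCurv_eq_metricTrace, hP, metricTrace_sub, hmean, sub_zero]
    rw [metricTrace_comm]
    exact congrArg _ (funext₂ fun x w => metricTrace_swap ginv e hsymm _)
  have hnorm : sqNormNablaJ = tensorInner ginv e g (fun x y => N x y) (fun x y => N x y) := by
    simp only [hsqNorm, tensorInner, metricTrace, mul_sum, mul_assoc]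
  rw [hτ, hnorm, tensorInner_flip_eq hg_symm hginv hN1 hcyc]

/-- (Equation 3.4) On a quasi-Kähler manifold with Norden metric,
`τ(P) = -(1/2)‖∇J‖²`. -/
theorem tau_P_eq
    {V : Type*} [AddCommGroup V] [Module ℝ V]
    (g : V →ₗ[ℝ] V →ₗ[ℝ] ℝ) (hg_symm : ∀ x y, g x y = g y x)
    (J : V →ₗ[ℝ] V) (hJ : ∀ x, J (J x) = -x)
    (hgJ : ∀ x y, g (J x) (J y) = -(g x y))
    (N : V →ₗ[ℝ] V →ₗ[ℝ] V)
    (hN1 : ∀ x y z, g (N x y) z = g (N x z) y)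
    (hN2 : ∀ x y, N x (J y) = -(J (N x y)))
    (F : V → V → V → ℝ) (hF : ∀ x y z, F x y z = g (N x y) z)
    (hW3 : ∀ x y z, F x y z + F y z x + F z x y = 0)
    (P : V → V → V → V → ℝ)
    (hP : ∀ x y z w, P x y z w = g (N x z) (N y w) - g (N y z) (N x w))
    {ι : Type*} [Fintype ι] [DecidableEq ι]
    (e : Module.Basis ι ℝ V) (ginv : ι → ι → ℝ)
    (hginv : ∀ i j, ∑ k, ginv i k * g (e k) (e j) = if i = j then 1 else 0)
    (sqNormNablaJ : ℝ)
    (hsqNorm : sqNormNablaJ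
      = ∑ i, ∑ j, ∑ k, ∑ s,
          ginv i j * ginv k s * g (N (e i) (e k)) (N (e j) (e s))) :
    scalarCurv ginv (⇑e) P = -(1/2) * sqNormNablaJ :=
  tau_P_eq_general g hg_symm J hJ N hN1 hN2 F hF hW3 P hP e ginv hginv sqNormNablaJ hsqNorm
end

section
/- (Equation 3.5) Assume the quasi-Kähler (class W₃) condition, let R be a quadrilinear form on V, and assume the identity τ(R) + τ** = -(1/2)‖∇J‖² (valid on quasi-Kähler manifolds with Norden metric), where τ** = Σ g^{ij} g^{ks} R(e_i, e_k, J e_s, J e_j) and ‖∇J‖² = Σ g^{ij} g^{ks} g(N(e_i,e_k), N(e_j,e_s)). Then τ(R) = τ(K) - (1/8)‖∇J‖², where K(x,y,z,w) = (1/4)(2R(x,y,z,w) - 2R(x,y,Jz,Jw) + P(x,y,z,w)). -/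
noncomputable def metricContract {V ι : Type*} [Fintype ι]
    (ginv : ι → ι → ℝ) (e : ι → V) (β : V → V → ℝ) : ℝ :=
  ∑ i, ∑ j, ginv i j * β (e i) (e j)

noncomputable def dualVec {V ι : Type*} [AddCommGroup V] [Module ℝ V] [Fintype ι]
    (ginv : ι → ι → ℝ) (e : ι → V) (i : ι) : V :=
  ∑ j, ginv i j • e j

section MetricContract

variable {V ι : Type*} [Fintype ι] (ginv : ι → ι → ℝ) (e : ι → V)

theorem scalarCurv_eq_metricContract (L : V → V → V → V → ℝ) :
    scalarCurv ginv e L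
      = metricContract ginv e fun y z => metricContract ginv e fun x w => L x y z w :=
  rfl

theorem metricContract_congr {β γ : V → V → ℝ} (h : ∀ x y, β x y = γ x y) :
    metricContract ginv e β = metricContract ginv e γ := by
  simp only [metricContract, h]

theorem metricContract_add (β γ : V → V → ℝ) :
    metricContract ginv e (fun x y => β x y + γ x y)
      = metricContract ginv e β + metricContract ginv e γ := by
  simp only [metricContract, mul_add, Finset.sum_add_distrib]

theorem metricContract_sub (β γ : V → V → ℝ) :
    metricContract ginv e (fun x y => β x y - γ x y)
      = metricContract ginv e β - metricContract ginv e γ := by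
  simp only [metricContract, mul_sub, Finset.sum_sub_distrib]

theorem metricContract_const_mul (c : ℝ) (β : V → V → ℝ) :
    metricContract ginv e (fun x y => c * β x y) = c * metricContract ginv e β := by
  simp only [metricContract, Finset.mul_sum, mul_left_comm]

theorem metricContract_zero : metricContract ginv e (fun _ _ => 0) = 0 := by
  simp [metricContract]

theorem metricContract_metricContract (Φ : V → V → V → V → ℝ) :
    (metricContract ginv e fun x y => metricContract ginv e fun z w => Φ x y z w)
      = ∑ i, ∑ j, ∑ k, ∑ s, ginv i j * ginv k s * Φ (e i) (e j) (e k) (e s) := by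
  simp only [metricContract, Finset.mul_sum, mul_assoc]

theorem metricContract_comm (Φ : V → V → V → V → ℝ) :
    (metricContract ginv e fun x y => metricContract ginv e fun z w => Φ x y z w)
      = metricContract ginv e fun z w => metricContract ginv e fun x y => Φ x y z w := by
  simp only [metricContract_metricContract]
  calc ∑ i, ∑ j, ∑ k, ∑ s, ginv i j * ginv k s * Φ (e i) (e j) (e k) (e s)
      = ∑ i, ∑ k, ∑ j, ∑ s, ginv i j * ginv k s * Φ (e i) (e j) (e k) (e s) :=
        Finset.sum_congr rfl fun _ _ => Finset.sum_comm
    _ = ∑ k, ∑ i, ∑ s, ∑ j, ginv i j * ginv k s * Φ (e i) (e j) (e k) (e s) := by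
        rw [Finset.sum_comm]
        exact Finset.sum_congr rfl fun _ _ => Finset.sum_congr rfl fun _ _ => Finset.sum_comm
    _ = ∑ k, ∑ s, ∑ i, ∑ j, ginv k s * ginv i j * Φ (e i) (e j) (e k) (e s) := by
        refine Finset.sum_congr rfl fun _ _ => ?_
        rw [Finset.sum_comm]
        exact Finset.sum_congr rfl fun _ _ => Finset.sum_congr rfl fun _ _ =>
          Finset.sum_congr rfl fun _ _ => by ring

theorem metricContract_flip (hginv : ∀ i j, ginv i j = ginv j i) (β : V → V → ℝ) :
    metricContract ginv e (fun x y => β y x) = metricContract ginv e β := by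
  unfold metricContract
  rw [Finset.sum_comm]
  simp_rw [hginv]

end MetricContract

section DualBasis

variable {V : Type*} [AddCommGroup V] [Module ℝ V] (g : V →ₗ[ℝ] V →ₗ[ℝ] ℝ)
  {ι : Type*} [Fintype ι] (e : Module.Basis ι ℝ V) (ginv : ι → ι → ℝ)

theorem repr_dualVec (i j : ι) : e.repr (dualVec ginv e i) j = ginv i j := by
  classical
  simp [dualVec, Finsupp.single_apply]

theorem metricContract_eq_sum_dualVec (β : V → V →ₗ[ℝ] ℝ) :
    metricContract ginv e (fun x y => β x y) = ∑ i, β (e i) (dualVec ginv e i) := by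
  simp only [metricContract, dualVec, map_sum, map_smul, smul_eq_mul]

variable [DecidableEq ι]

theorem apply_dualVec (hg_symm : ∀ x y, g x y = g y x)
    (hginv : ∀ i j, ∑ k, ginv i k * g (e k) (e j) = if i = j then 1 else 0)
    (v : V) (i : ι) : g v (dualVec ginv e i) = e.repr v i := by
  have h : g.flip (dualVec ginv e i) = e.coord i := e.ext fun m => by
    rw [LinearMap.flip_apply, hg_symm, Module.Basis.coord_apply, Module.Basis.repr_self_apply]
    simp only [dualVec, map_sum, map_smul, LinearMap.sum_apply,
      LinearMap.smul_apply, smul_eq_mul, hginv]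
    exact if_congr (Q := m = i) eq_comm rfl rfl
  exact LinearMap.congr_fun h v

theorem ginv_symm (hg_symm : ∀ x y, g x y = g y x)
    (hginv : ∀ i j, ∑ k, ginv i k * g (e k) (e j) = if i = j then 1 else 0)
    (i j : ι) : ginv i j = ginv j i := by
  rw [← repr_dualVec e ginv i j, ← apply_dualVec g e ginv hg_symm hginv, hg_symm,
    apply_dualVec g e ginv hg_symm hginv, repr_dualVec]

theorem metricContract_mul_apply (hg_symm : ∀ x y, g x y = g y x)
    (hginv : ∀ i j, ∑ k, ginv i k * g (e k) (e j) = if i = j then 1 else 0) (u v : V) :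
    metricContract ginv e (fun a b => g u a * g v b) = g u v := by
  have := metricContract_eq_sum_dualVec e ginv (fun a => g u a • g v)
  simp only [LinearMap.smul_apply, smul_eq_mul] at this
  rw [this]
  simp only [apply_dualVec g e ginv hg_symm hginv]
  conv_rhs => rw [← e.sum_repr v]
  simp only [map_sum, map_smul, smul_eq_mul, mul_comm]

theorem metricContract_apply_eq_trace (hg_symm : ∀ x y, g x y = g y x)
    (hginv : ∀ i j, ∑ k, ginv i k * g (e k) (e j) = if i = j then 1 else 0) (A : V →ₗ[ℝ] V) :
    metricContract ginv e (fun x y => g (A x) y) = LinearMap.trace ℝ V A := by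
  rw [metricContract_eq_sum_dualVec e ginv (fun x => g (A x)), LinearMap.trace_eq_matrix_trace ℝ e]
  simp only [apply_dualVec g e ginv hg_symm hginv, Matrix.trace, Matrix.diag,
    LinearMap.toMatrix_apply]

end DualBasis

theorem LinearMap.trace_eq_zero_of_comp_eq_neg {R M : Type*} [CommRing R] [IsAddTorsionFree R]
    [AddCommGroup M] [Module R M] (A J : M →ₗ[R] M) (hJ : J ∘ₗ J = -LinearMap.id)
    (hAJ : A ∘ₗ J = -(J ∘ₗ A)) : LinearMap.trace R M A = 0 := by
  refine self_eq_neg.mp ?_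
  calc trace R M A = trace R M (J ∘ₗ (A ∘ₗ J)) := by
        rw [hAJ, LinearMap.comp_neg, ← LinearMap.comp_assoc, hJ]; simp
    _ = trace R M ((A ∘ₗ J) ∘ₗ J) := LinearMap.trace_mul_comm R J (A ∘ₗ J)
    _ = -trace R M A := by rw [LinearMap.comp_assoc, hJ]; simp

section Cyclic

variable {V ι : Type*} [Fintype ι] (ginv : ι → ι → ℝ) (e : ι → V)

theorem metricContract_mul_self_of_cyclic (hginv : ∀ i j, ginv i j = ginv j i)
    (F : V → V → V → ℝ) (hsymm : ∀ x y z, F x y z = F x z y)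
    (hcyc : ∀ x y z, F x y z + F y z x + F z x y = 0) :
    (metricContract ginv e fun x y => metricContract ginv e fun z w =>
        metricContract ginv e fun a b => F x z a * F y w b)
      = -2 * metricContract ginv e fun x y => metricContract ginv e fun z w =>
        metricContract ginv e fun a b => F x w a * F z y b := by
  set T := metricContract ginv e fun x y => metricContract ginv e fun z w =>
    metricContract ginv e fun a b => F x w a * F z y b
  have hT : (metricContract ginv e fun x y => metricContract ginv e fun z w =>
      metricContract ginv e fun a b => F x z a * F w y b) = T :=
    metricContract_congr ginv e fun x y => (metricContract_flip ginv e hginv _).symm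
  have h₁ : (metricContract ginv e fun x y => metricContract ginv e fun z w =>
      metricContract ginv e fun a b => F z a x * F y w b) = T := by
    calc _ = metricContract ginv e fun x y => metricContract ginv e fun z w =>
            metricContract ginv e fun a b => F z x a * F y w b :=
          metricContract_congr ginv e fun x y => metricContract_congr ginv e fun z w =>
            metricContract_congr ginv e fun a b => by rw [hsymm z a x]
      _ = metricContract ginv e fun z w => metricContract ginv e fun x y =>
            metricContract ginv e fun a b => F z x a * F y w b := metricContract_comm ginv e _
      _ = T := hT
  have h₂ : (metricContract ginv e fun x y => metricContract ginv e fun z w =>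
      metricContract ginv e fun a b => F a x z * F y w b) = T := by
    calc _ = metricContract ginv e fun x y => metricContract ginv e fun a b =>
            metricContract ginv e fun z w => F a x z * F y w b :=
          metricContract_congr ginv e fun x y => metricContract_comm ginv e _
      _ = metricContract ginv e fun a b => metricContract ginv e fun x y =>
            metricContract ginv e fun z w => F a x z * F y w b := metricContract_comm ginv e _
      _ = metricContract ginv e fun a b => metricContract ginv e fun x y =>
            metricContract ginv e fun z w => F a x z * F y b w :=
          metricContract_congr ginv e fun a b => metricContract_congr ginv e fun x y =>
            metricContract_congr ginv e fun z w => by rw [hsymm y w b]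
      _ = T := hT
  have hsum : (metricContract ginv e fun x y => metricContract ginv e fun z w =>
      metricContract ginv e fun a b => (F x z a + F z a x + F a x z) * F y w b) = 0 := by
    simp only [hcyc, zero_mul, metricContract_zero]
  simp only [add_mul, metricContract_add, h₁, h₂] at hsum
  linarith

end Cyclic

section QuasiKahler

variable {V : Type*} [AddCommGroup V] [Module ℝ V] (g : V →ₗ[ℝ] V →ₗ[ℝ] ℝ) (J : V →ₗ[ℝ] V)
  (N : V →ₗ[ℝ] V →ₗ[ℝ] V) {ι : Type*} [Fintype ι] [DecidableEq ι] (e : Module.Basis ι ℝ V)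
  (ginv : ι → ι → ℝ)

theorem metricContract_N_apply_eq_zero (hg_symm : ∀ x y, g x y = g y x)
    (hginv : ∀ i j, ∑ k, ginv i k * g (e k) (e j) = if i = j then 1 else 0)
    (hJ : ∀ x, J (J x) = -x) (hN1 : ∀ x y z, g (N x y) z = g (N x z) y)
    (hN2 : ∀ x y, N x (J y) = -(J (N x y)))
    (hcyc : ∀ x y z, g (N x y) z + g (N y z) x + g (N z x) y = 0) (z : V) :
    metricContract ginv e (fun x y => g (N x y) z) = 0 := by
  have htrace : metricContract ginv e (fun x y => g (N z x) y) = 0 := by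
    rw [metricContract_apply_eq_trace g e ginv hg_symm hginv (N z)]
    exact LinearMap.trace_eq_zero_of_comp_eq_neg (N z) J (LinearMap.ext hJ)
      (LinearMap.ext (hN2 z))
  have hsum : metricContract ginv e (fun x y => g (N x y) z + g (N y x) z + g (N z x) y) = 0 :=
    (metricContract_congr ginv e fun x y => by rw [hN1 y x z]; exact hcyc x y z).trans
      (metricContract_zero ginv e)
  rw [metricContract_add, metricContract_add, htrace,
    metricContract_flip ginv e (ginv_symm g e ginv hg_symm hginv) (fun x y => g (N x y) z)]
    at hsum
  linarith

theorem scalarCurv_eq_neg_half_metricContract (hg_symm : ∀ x y, g x y = g y x)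
    (hginv : ∀ i j, ∑ k, ginv i k * g (e k) (e j) = if i = j then 1 else 0)
    (hJ : ∀ x, J (J x) = -x) (hN1 : ∀ x y z, g (N x y) z = g (N x z) y)
    (hN2 : ∀ x y, N x (J y) = -(J (N x y)))
    (hcyc : ∀ x y z, g (N x y) z + g (N y z) x + g (N z x) y = 0) :
    scalarCurv ginv e (fun x y z w => g (N x z) (N y w) - g (N y z) (N x w))
      = -(1/2) * metricContract ginv e fun x y => metricContract ginv e fun z w =>
          g (N x z) (N y w) := by
  have hsq : (metricContract ginv e fun x y => metricContract ginv e fun z w =>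
        g (N x z) (N y w))
      = -2 * metricContract ginv e fun x y => metricContract ginv e fun z w =>
          g (N x w) (N z y) := by
    simpa only [metricContract_mul_apply g e ginv hg_symm hginv] using
      metricContract_mul_self_of_cyclic ginv e (ginv_symm g e ginv hg_symm hginv)
        (fun x y z => g (N x y) z) hN1 hcyc
  have htrace : (metricContract ginv e fun y z => metricContract ginv e fun x w =>
      g (N y z) (N x w)) = 0 :=
    (metricContract_congr ginv e fun y z => by
      simp only [hg_symm (N y z)]
      exact metricContract_N_apply_eq_zero g J N e ginv hg_symm hginv hJ hN1 hN2 hcyc _).trans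
      (metricContract_zero ginv e)
  rw [scalarCurv_eq_metricContract]
  simp only [metricContract_sub]
  rw [htrace, metricContract_comm, hsq]
  ring

end QuasiKahler

theorem tau_eq_tauK_sub_general
    {V : Type*} [AddCommGroup V] [Module ℝ V]
    (g : V →ₗ[ℝ] V →ₗ[ℝ] ℝ) (hg_symm : ∀ x y, g x y = g y x)
    (J : V →ₗ[ℝ] V) (hJ : ∀ x, J (J x) = -x)
    (N : V →ₗ[ℝ] V →ₗ[ℝ] V)
    (hN1 : ∀ x y z, g (N x y) z = g (N x z) y)
    (hN2 : ∀ x y, N x (J y) = -(J (N x y)))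
    (F : V → V → V → ℝ) (hF : ∀ x y z, F x y z = g (N x y) z)
    (hW3 : ∀ x y z, F x y z + F y z x + F z x y = 0)
    (P : V → V → V → V → ℝ)
    (hP : ∀ x y z w, P x y z w = g (N x z) (N y w) - g (N y z) (N x w))
    {ι : Type*} [Fintype ι] [DecidableEq ι]
    (e : Module.Basis ι ℝ V) (ginv : ι → ι → ℝ)
    (hginv : ∀ i j, ∑ k, ginv i k * g (e k) (e j) = if i = j then 1 else 0)
    (R : V → V → V → V → ℝ)
    (K : V → V → V → V → ℝ)
    (hK : ∀ x y z w, K x y z w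
      = (1/4) * (2 * R x y z w - 2 * R x y (J z) (J w) + P x y z w))
    (tauStarStar : ℝ)
    (hTauStarStar : tauStarStar
      = ∑ i, ∑ j, ∑ k, ∑ s,
          ginv i j * ginv k s * R (e i) (e k) (J (e s)) (J (e j)))
    (sqNormNablaJ : ℝ)
    (hsqNorm : sqNormNablaJ
      = ∑ i, ∑ j, ∑ k, ∑ s,
          ginv i j * ginv k s * g (N (e i) (e k)) (N (e j) (e s)))
    (hTau : scalarCurv ginv (⇑e) R + tauStarStar = -(1/2) * sqNormNablaJ) :
    scalarCurv ginv (⇑e) R = scalarCurv ginv (⇑e) K - (1/8) * sqNormNablaJ := by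
  have hcyc : ∀ x y z, g (N x y) z + g (N y z) x + g (N z x) y = 0 := fun x y z => by
    simpa only [hF] using hW3 x y z
  have hS : sqNormNablaJ = metricContract ginv e fun x y => metricContract ginv e fun z w =>
      g (N x z) (N y w) := by
    rw [hsqNorm, metricContract_metricContract]
  have hTauP : scalarCurv ginv e P = -(1/2) * sqNormNablaJ := by
    rw [show P = _ from funext fun x => funext fun y => funext fun z => funext (hP x y z), hS]
    exact scalarCurv_eq_neg_half_metricContract g J N e ginv hg_symm hginv hJ hN1 hN2 hcyc
  have hTauStar : scalarCurv ginv e (fun x y z w => R x y (J z) (J w)) = tauStarStar := by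
    rw [hTauStarStar, scalarCurv_eq_metricContract, metricContract_comm,
      metricContract_metricContract]
  have hTauK : scalarCurv ginv e K
      = 1/4 * (2 * scalarCurv ginv e R - 2 * tauStarStar + scalarCurv ginv e P) := by
    rw [show K = _ from funext fun x => funext fun y => funext fun z => funext (hK x y z),
      ← hTauStar]
    simp only [scalarCurv_eq_metricContract, metricContract_add, metricContract_sub,
      metricContract_const_mul]
  linarith

/-- (Equation 3.5) On a quasi-Kähler manifold with Norden metric,
`τ = τ(K) - (1/8)‖∇J‖²`. -/
theorem tau_eq_tauK_sub
    {V : Type*} [AddCommGroup V] [Module ℝ V]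
    (g : V →ₗ[ℝ] V →ₗ[ℝ] ℝ) (hg_symm : ∀ x y, g x y = g y x)
    (J : V →ₗ[ℝ] V) (hJ : ∀ x, J (J x) = -x)
    (hgJ : ∀ x y, g (J x) (J y) = -(g x y))
    (N : V →ₗ[ℝ] V →ₗ[ℝ] V)
    (hN1 : ∀ x y z, g (N x y) z = g (N x z) y)
    (hN2 : ∀ x y, N x (J y) = -(J (N x y)))
    (F : V → V → V → ℝ) (hF : ∀ x y z, F x y z = g (N x y) z)
    (hW3 : ∀ x y z, F x y z + F y z x + F z x y = 0)
    (P : V → V → V → V → ℝ)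
    (hP : ∀ x y z w, P x y z w = g (N x z) (N y w) - g (N y z) (N x w))
    {ι : Type*} [Fintype ι] [DecidableEq ι]
    (e : Module.Basis ι ℝ V) (ginv : ι → ι → ℝ)
    (hginv : ∀ i j, ∑ k, ginv i k * g (e k) (e j) = if i = j then 1 else 0)
    (R : V → V → V → V → ℝ)
    (K : V → V → V → V → ℝ)
    (hK : ∀ x y z w, K x y z w
      = (1/4) * (2 * R x y z w - 2 * R x y (J z) (J w) + P x y z w))
    (tauStarStar : ℝ)
    (hTauStarStar : tauStarStar
      = ∑ i, ∑ j, ∑ k, ∑ s,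
          ginv i j * ginv k s * R (e i) (e k) (J (e s)) (J (e j)))
    (sqNormNablaJ : ℝ)
    (hsqNorm : sqNormNablaJ
      = ∑ i, ∑ j, ∑ k, ∑ s,
          ginv i j * ginv k s * g (N (e i) (e k)) (N (e j) (e s)))
    (hTau : scalarCurv ginv (⇑e) R + tauStarStar = -(1/2) * sqNormNablaJ) :
    scalarCurv ginv (⇑e) R = scalarCurv ginv (⇑e) K - (1/8) * sqNormNablaJ :=
  tau_eq_tauK_sub_general g hg_symm J hJ N hN1 hN2 F hF hW3 P hP e ginv hginv R K hK tauStarStar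
    hTauStarStar sqNormNablaJ hsqNorm hTau
end
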